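/- Let H : ℝ → ℝ be the Heaviside function with H(y) = 1 for y > 0 and H(y) = 0 for y ≤ 0. Let γ > 0, c ∈ ℝ, x⁰(t) = exp(−γ t/2)·(cos t + (γ/2)·sin t), and t_i = i·π − arctan(2/γ) for integers i ≥ 1. Define u : ℝ → ℝ by u(t) = c·x⁰(t)·S(t), where S(t) = Σ_{i≥1} (−1)^i·H(t − t_i) (for each fixed t only the finitely many indices i with t_i ≤ t contribute). Then u is continuous on ℝ, u(t) = 0 and u̇(t) = 0 for all t ≤ 0, and for every t ∉ {t_i : i ≥ 1}, ü(t) + γ·u̇(t) + (1 + γ²/4)·u(t) = 0. -/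

import Mathlib

open Real

/-- Heaviside function: `H y = 1` for `y > 0`, `H y = 0` for `y ≤ 0`. -/
noncomputable def H (y : ℝ) : ℝ := if 0 < y then 1 else 0

/-- Zeroth-order deformation solution for the unilaterally constrained
pendulum. -/
noncomputable def x0 (γ : ℝ) (t : ℝ) : ℝ :=
  Real.exp (-(γ * t / 2)) * (Real.cos t + (γ / 2) * Real.sin t)

/-- The impact instants `t_i = iπ − arctan(2/γ)`, the positive zeros of `x0`. -/
noncomputable def timp (γ : ℝ) (i : ℕ) : ℝ := i * π - Real.arctan (2 / γ)

/-- `S(t) = Σ_{i ≥ 1} (−1)^i · H(t − t_i)`; for each fixed `t` only the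
finitely many indices `i` with `t_i ≤ t` contribute, so the sum converges. -/
noncomputable def S (γ : ℝ) (t : ℝ) : ℝ :=
  ∑' i : ℕ, (-1 : ℝ) ^ (i + 1) * H (t - timp γ (i + 1))

/-- First-order deformation solution `u(t) = c·x0(t)·S(t)` (with `c = ε h₁`). -/
noncomputable def u (γ c : ℝ) (t : ℝ) : ℝ := c * x0 γ t * S γ t

lemma H_abs_le (y : ℝ) : |H y| ≤ 1 := by unfold H; split_ifs <;> norm_num

lemma H_of_nonpos {y : ℝ} (h : y ≤ 0) : H y = 0 := if_neg (not_lt.2 h)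

lemma H_congr {x y : ℝ} (hy : y ≠ 0) (h : |x - y| < |y|) : H x = H y := by
  unfold H
  rcases hy.lt_or_gt with h1 | h1
  · rw [abs_of_neg h1] at h
    have := abs_lt.1 h
    rw [if_neg (by linarith : ¬ 0 < x), if_neg (not_lt.2 h1.le)]
  · rw [abs_of_pos h1] at h
    have := abs_lt.1 h
    rw [if_pos (by linarith : 0 < x), if_pos h1]

lemma arctan_lt_pi : Real.arctan (2 / γ) < π := by
  have := Real.arctan_lt_pi_div_two (2 / γ)
  linarith [Real.pi_pos]

lemma timp_pos {γ : ℝ} (i : ℕ) : 0 < timp γ (i + 1) := by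
  have h1 : Real.arctan (2 / γ) < π / 2 := Real.arctan_lt_pi_div_two _
  have h2 : (1 : ℝ) * π ≤ ((i : ℝ) + 1) * π := by
    have : (1 : ℝ) ≤ (i : ℝ) + 1 := by exact_mod_cast Nat.le_add_left 1 i
    nlinarith [Real.pi_pos]
  unfold timp
  push_cast
  nlinarith [Real.pi_pos]

lemma S_eq_sum {γ t : ℝ} {N : ℕ} (hN : t < ((N : ℝ) + 1) * π - Real.arctan (2 / γ)) :
    S γ t = ∑ i ∈ Finset.range N, (-1 : ℝ) ^ (i + 1) * H (t - timp γ (i + 1)) := by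
  refine tsum_eq_sum ?_
  intro i hi
  have hiN : N ≤ i := by simpa using hi
  have : timp γ (i + 1) ≥ ((N : ℝ) + 1) * π - Real.arctan (2 / γ) := by
    unfold timp
    push_cast
    have : ((N : ℝ) + 1) * π ≤ ((i : ℝ) + 1) * π := by
      have : ((N : ℝ) + 1) ≤ (i : ℝ) + 1 := by exact_mod_cast Nat.succ_le_succ hiN
      nlinarith [Real.pi_pos]
    linarith
  rw [H_of_nonpos (by linarith), mul_zero]

lemma exists_N (γ t : ℝ) : ∃ N : ℕ, t + 1 < ((N : ℝ) + 1) * π - Real.arctan (2 / γ) := by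
  obtain ⟨N, hN⟩ := exists_nat_gt ((t + 1 + Real.arctan (2 / γ)) / π)
  refine ⟨N, ?_⟩
  rw [div_lt_iff₀ Real.pi_pos] at hN
  nlinarith [Real.pi_pos]

/-- Local constancy of `S` at non-impact points. -/
lemma S_locally_const {γ t : ℝ} (ht : ∀ i : ℕ, 1 ≤ i → t ≠ timp γ i) :
    ∃ ε > 0, ∀ s : ℝ, |s - t| < ε → S γ s = S γ t := by
  obtain ⟨N, hN⟩ := exists_N γ t
  set F : Finset ℝ := insert (1 : ℝ) ((Finset.range N).image fun i => |t - timp γ (i + 1)|) with hF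
  have hFne : F.Nonempty := ⟨1, Finset.mem_insert_self _ _⟩
  refine ⟨F.min' hFne, ?_, ?_⟩
  · rw [gt_iff_lt, Finset.lt_min'_iff]
    intro y hy
    rcases Finset.mem_insert.1 hy with rfl | hy
    · norm_num
    · obtain ⟨i, -, rfl⟩ := Finset.mem_image.1 hy
      have : t ≠ timp γ (i + 1) := ht (i + 1) (Nat.le_add_left 1 i)
      have : t - timp γ (i + 1) ≠ 0 := sub_ne_zero.2 this
      exact abs_pos.2 this
  · intro s hs
    have hle1 : F.min' hFne ≤ 1 := Finset.min'_le _ _ (Finset.mem_insert_self _ _)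
    have hs1 : |s - t| < 1 := lt_of_lt_of_le hs hle1
    have habs := abs_lt.1 hs1
    rw [S_eq_sum (by linarith : s < ((N : ℝ) + 1) * π - Real.arctan (2 / γ)),
        S_eq_sum (by linarith : t < ((N : ℝ) + 1) * π - Real.arctan (2 / γ))]
    refine Finset.sum_congr rfl fun i hi => ?_
    congr 1
    have hne : t - timp γ (i + 1) ≠ 0 :=
      sub_ne_zero.2 (ht (i + 1) (Nat.le_add_left 1 i))
    refine H_congr hne ?_
    have : F.min' hFne ≤ |t - timp γ (i + 1)| :=
      Finset.min'_le _ _ (Finset.mem_insert_of_mem (Finset.mem_image_of_mem _ hi))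
    calc |s - timp γ (i + 1) - (t - timp γ (i + 1))| = |s - t| := by ring_nf
      _ < |t - timp γ (i + 1)| := lt_of_lt_of_le hs this

noncomputable def x1 (γ : ℝ) (t : ℝ) : ℝ :=
  -(1 + γ ^ 2 / 4) * (Real.exp (-(γ * t / 2)) * Real.sin t)

noncomputable def x2 (γ : ℝ) (t : ℝ) : ℝ :=
  -(1 + γ ^ 2 / 4) * (Real.exp (-(γ * t / 2)) * (Real.cos t - γ / 2 * Real.sin t))

lemma expAux (γ t : ℝ) :
    HasDerivAt (fun s : ℝ => Real.exp (-(γ * s / 2))) (-(γ / 2) * Real.exp (-(γ * t / 2))) t := by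
  have h1 : HasDerivAt (fun s : ℝ => -(γ * s / 2)) (-(γ / 2)) t := by
    simpa using ((hasDerivAt_id t).const_mul γ |>.div_const 2).fun_neg
  simpa [mul_comm] using h1.exp

lemma x0_hasDeriv (γ t : ℝ) : HasDerivAt (x0 γ) (x1 γ t) t := by
  have h2 : HasDerivAt (fun s : ℝ => Real.cos s + γ / 2 * Real.sin s)
      (-Real.sin t + γ / 2 * Real.cos t) t :=
    (Real.hasDerivAt_cos t).add ((Real.hasDerivAt_sin t).const_mul (γ / 2))
  have := (expAux γ t).mul h2
  refine this.congr_deriv ?_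
  unfold x1
  nlinarith [Real.sin_sq_add_cos_sq t]

lemma x1_hasDeriv (γ t : ℝ) : HasDerivAt (x1 γ) (x2 γ t) t := by
  have h := ((expAux γ t).mul (Real.hasDerivAt_sin t)).const_mul (-(1 + γ ^ 2 / 4))
  refine h.congr_deriv ?_
  unfold x2
  ring

lemma ode_x0 (γ t : ℝ) : x2 γ t + γ * x1 γ t + (1 + γ ^ 2 / 4) * x0 γ t = 0 := by
  unfold x0 x1 x2; ring

lemma x0_timp {γ : ℝ} (hγ : 0 < γ) (i : ℕ) : x0 γ (timp γ i) = 0 := by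
  unfold x0 timp
  have hs : Real.sin (Real.arctan (2 / γ)) = (2 / γ) / Real.sqrt (1 + (2 / γ) ^ 2) :=
    Real.sin_arctan _
  have hc : Real.cos (Real.arctan (2 / γ)) = 1 / Real.sqrt (1 + (2 / γ) ^ 2) :=
    Real.cos_arctan _
  rw [Real.cos_nat_mul_pi_sub, Real.sin_nat_mul_pi_sub, hs, hc]
  field_simp
  ring

lemma x0_cont (γ : ℝ) : Continuous (x0 γ) := by
  unfold x0; continuity

lemma hasDeriv_u {γ c t : ℝ} {ε : ℝ} (hε : 0 < ε)
    (h : ∀ s : ℝ, |s - t| < ε → S γ s = S γ t) :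
    HasDerivAt (u γ c) (c * S γ t * x1 γ t) t := by
  have hx : HasDerivAt (fun s => c * S γ t * x0 γ s) (c * S γ t * x1 γ t) t :=
    (x0_hasDeriv γ t).const_mul _
  refine hx.congr_of_eventuallyEq ?_
  rw [Filter.EventuallyEq, Metric.eventually_nhds_iff]
  refine ⟨ε, hε, fun s hs => ?_⟩
  rw [Real.dist_eq] at hs
  unfold u
  rw [h s hs]; ring

lemma S_abs_le {γ t : ℝ} {N : ℕ} (hN : t < ((N : ℝ) + 1) * π - Real.arctan (2 / γ)) :
    |S γ t| ≤ N := by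
  rw [S_eq_sum hN]
  calc |∑ i ∈ Finset.range N, (-1 : ℝ) ^ (i + 1) * H (t - timp γ (i + 1))|
      ≤ ∑ i ∈ Finset.range N, |(-1 : ℝ) ^ (i + 1) * H (t - timp γ (i + 1))| :=
        Finset.abs_sum_le_sum_abs _ _
    _ ≤ ∑ _i ∈ Finset.range N, (1 : ℝ) := by
        refine Finset.sum_le_sum fun i _ => ?_
        rw [abs_mul, abs_pow, abs_neg, abs_one, one_pow, one_mul]
        exact H_abs_le _
    _ = N := by simp

lemma S_of_nonpos {γ t : ℝ} (h : t < π - Real.arctan (2 / γ)) : S γ t = 0 := by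
  have : t < ((0 : ℕ) + 1 : ℝ) * π - Real.arctan (2 / γ) := by push_cast; linarith
  rw [S_eq_sum this]; simp

theorem stmt_13 (γ : ℝ) (hγ : 0 < γ) (c : ℝ) :
    Continuous (u γ c) ∧
    (∀ t : ℝ, t ≤ 0 → u γ c t = 0 ∧ deriv (u γ c) t = 0) ∧
    ∀ t : ℝ, (∀ i : ℕ, 1 ≤ i → t ≠ timp γ i) →
      deriv (deriv (u γ c)) t + γ * deriv (u γ c) t
        + (1 + γ ^ 2 / 4) * u γ c t = 0 := by
  have hpi1 : (0 : ℝ) < π - Real.arctan (2 / γ) := by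
    have := timp_pos (γ := γ) 0
    unfold timp at this
    push_cast at this
    linarith
  refine ⟨?_, ?_, ?_⟩
  · -- Continuity
    rw [continuous_iff_continuousAt]
    intro t
    by_cases ht : ∀ i : ℕ, 1 ≤ i → t ≠ timp γ i
    · obtain ⟨ε, hε, h⟩ := S_locally_const ht
      exact (hasDeriv_u (c := c) hε h).continuousAt
    · push_neg at ht
      obtain ⟨i, hi1, hti⟩ := ht
      have hx0t : x0 γ t = 0 := by rw [hti]; exact x0_timp hγ i
      have hut : u γ c t = 0 := by unfold u; rw [hx0t]; ring
      rw [ContinuousAt, hut]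
      obtain ⟨N, hN⟩ := exists_N γ t
      refine squeeze_zero_norm' (a := fun s => |c| * N * |x0 γ s|) ?_ ?_
      · rw [Metric.eventually_nhds_iff]
        refine ⟨1, one_pos, fun s hs => ?_⟩
        rw [Real.dist_eq] at hs
        have habs := abs_lt.1 hs
        have hSb : |S γ s| ≤ N := S_abs_le (by linarith)
        have : ‖u γ c s‖ = |c| * |x0 γ s| * |S γ s| := by
          unfold u; rw [Real.norm_eq_abs, abs_mul, abs_mul]
        rw [this]
        calc |c| * |x0 γ s| * |S γ s| ≤ |c| * |x0 γ s| * N :=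
              mul_le_mul_of_nonneg_left hSb (by positivity)
          _ = |c| * N * |x0 γ s| := by ring
      · have : Filter.Tendsto (fun s => |c| * N * |x0 γ s|) (nhds t)
            (nhds (|c| * N * |x0 γ t|)) :=
          (continuous_const.mul ((x0_cont γ).abs)).tendsto t
        rwa [hx0t, abs_zero, mul_zero] at this
  · -- t ≤ 0
    intro t ht
    have hu0 : ∀ s : ℝ, s < π - Real.arctan (2 / γ) → u γ c s = 0 := by
      intro s hs
      unfold u
      rw [S_of_nonpos hs]; ring
    constructor
    · exact hu0 t (by linarith)
    · have hev : u γ c =ᶠ[nhds t] fun _ => (0 : ℝ) := by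
        rw [Filter.EventuallyEq, Metric.eventually_nhds_iff]
        refine ⟨π - Real.arctan (2 / γ) - t, by linarith, fun s hs => ?_⟩
        rw [Real.dist_eq] at hs
        have := abs_lt.1 hs
        exact hu0 s (by linarith)
      rw [hev.deriv_eq, deriv_const]
  · -- ODE
    intro t ht
    obtain ⟨ε, hε, h⟩ := S_locally_const ht
    have hderiv : ∀ s : ℝ, |s - t| < ε → deriv (u γ c) s = c * S γ t * x1 γ s := by
      intro s hs
      have hεs : 0 < ε - |s - t| := by linarith
      have h' : ∀ r : ℝ, |r - s| < ε - |s - t| → S γ r = S γ s := by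
        intro r hr
        have : |r - t| < ε := by
          calc |r - t| ≤ |r - s| + |s - t| := abs_sub_le _ _ _
            _ < ε := by linarith
        rw [h r this, h s hs]
      have := (hasDeriv_u (c := c) hεs h').deriv
      rw [this, h s hs]
    have hd1 : deriv (u γ c) t = c * S γ t * x1 γ t := hderiv t (by simpa using hε)
    have hev : deriv (u γ c) =ᶠ[nhds t] fun s => c * S γ t * x1 γ s := by
      rw [Filter.EventuallyEq, Metric.eventually_nhds_iff]
      exact ⟨ε, hε, fun s hs => hderiv s (by rwa [Real.dist_eq] at hs)⟩
    have hx2 : HasDerivAt (fun s => c * S γ t * x1 γ s) (c * S γ t * x2 γ t) t :=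
      (x1_hasDeriv γ t).const_mul _
    have hd2 : deriv (deriv (u γ c)) t = c * S γ t * x2 γ t :=
      (hx2.congr_of_eventuallyEq hev).deriv
    rw [hd1, hd2]
    unfold u
    linear_combination c * S γ t * ode_x0 γ t
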